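/- If y ∈ ℕ satisfies y ≥ 2 and a₁ − d ≥ C(y,2) + 1 (where C(y,2) is the binomial coefficient y choose 2), then there exist indices h, k with 1 ≤ h ≤ k, k ≥ y, and ω_h + ω_k ∈ Ap(S); in particular ω_{a₁−1} ≥ ω₁ + ω_y. -/

import Mathlib

/-!
Every nonzero element `w` of the Apéry set of `S = ⟨a₁, …, a_d⟩` with respect to `a₁` is either a
generator other than `a₁`, or splits as `w = u + v` with `u` a nonzero generator and `v ≠ 0`; both
summands then lie in the Apéry set, so `w = ω_h + ω_k` with `1 ≤ h ≤ k`. If all such splittings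
had `k < y`, the `a₁ - 1` nonzero Apéry elements would be covered by at most `d - 1` generators and
`C(y, 2)` sums `ω_h + ω_k` with `1 ≤ h ≤ k < y`, contradicting `a₁ - d > C(y, 2)`.
-/

open Finset

/-- The Apéry set `{w ∈ S | w - n ∉ S}`, written without subtraction. -/
def apery {M : Type*} [Add M] (S : Set M) (n : M) : Set M :=
  {w ∈ S | ¬ ∃ s ∈ S, s + n = w}

section Apery

variable {M : Type*} [AddCommMonoid M]

theorem AddSubmonoid.eq_zero_or_exists_add_of_mem_closure {s : Set M} {x : M}
    (hx : x ∈ closure s) : x = 0 ∨ ∃ g ∈ s, g ≠ 0 ∧ ∃ v ∈ closure s, x = g + v := by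
  induction hx using AddSubmonoid.closure_induction with
  | mem g hg =>
    by_cases hg0 : g = 0
    · exact .inl hg0
    · exact .inr ⟨g, hg, hg0, 0, zero_mem _, (add_zero g).symm⟩
  | zero => exact .inl rfl
  | add x y _ hy hx_ih _ =>
    rcases hx_ih with rfl | ⟨g, hg, hg0, v, hv, rfl⟩
    · simpa only [zero_add] using ‹_ ∨ _›
    · exact .inr ⟨g, hg, hg0, v + y, add_mem hv hy, add_assoc g v y⟩

variable {S : AddSubmonoid M} {n : M}

theorem self_notMem_apery : n ∉ apery (S : Set M) n :=
  fun h => h.2 ⟨0, S.zero_mem, zero_add n⟩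

theorem mem_apery_of_add_mem_apery {u v : M} (hu : u ∈ S) (hv : v ∈ S)
    (huv : u + v ∈ apery (S : Set M) n) : u ∈ apery (S : Set M) n := by
  refine ⟨hu, ?_⟩
  rintro ⟨s, hs, rfl⟩
  exact huv.2 ⟨s + v, S.add_mem hs hv, add_right_comm s v n⟩

theorem mem_apery_closure_or_exists_add {s : Set M} {w : M}
    (hw : w ∈ apery (AddSubmonoid.closure s : Set M) n) (hw0 : w ≠ 0) :
    w ∈ s ∨ ∃ u ∈ apery (AddSubmonoid.closure s : Set M) n,
      ∃ v ∈ apery (AddSubmonoid.closure s : Set M) n, u ≠ 0 ∧ v ≠ 0 ∧ w = u + v := by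
  obtain h0 | ⟨g, hg, hg0, v, hv, rfl⟩ :=
    AddSubmonoid.eq_zero_or_exists_add_of_mem_closure hw.1
  · exact absurd h0 hw0
  by_cases hv0 : v = 0
  · subst hv0
    exact .inl (by simpa only [add_zero] using hg)
  · have hg' := AddSubmonoid.subset_closure hg
    refine .inr ⟨g, mem_apery_of_add_mem_apery hg' hv hw, v, ?_, hg0, hv0, rfl⟩
    exact mem_apery_of_add_mem_apery hv hg' (add_comm g v ▸ hw)

end Apery

theorem card_sym2_Ico_one (y : ℕ) : (Ico 1 y).sym2.card = y.choose 2 := by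
  rw [card_sym2, Nat.card_Ico]
  cases y <;> simp

theorem exists_eq_add_of_card_lt {ω : ℕ → ℕ} {n y : ℕ} (G : Finset ℕ)
    (hinj : Set.InjOn ω (Set.Ico 1 n)) (hcard : G.card + y.choose 2 < n - 1)
    (hcover : ∀ m ∈ Set.Ico 1 n, ω m ∈ G ∨
      ∃ h ∈ Set.Ico 1 n, ∃ k ∈ Set.Ico 1 n, ω m = ω h + ω k) :
    ∃ m < n, ∃ h k, 1 ≤ h ∧ h ≤ k ∧ y ≤ k ∧ k < n ∧ ω m = ω h + ω k := by
  by_contra! H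
  have hsmall : ∀ m < n, ∀ h ∈ Set.Ico 1 n, ∀ k ∈ Set.Ico 1 n,
      ω m = ω h + ω k → h < y ∧ k < y := by
    intro m hm h hh k hk hmhk
    rcases le_total h k with hle | hle
    · have : k < y := by
        by_contra! hky
        exact H m hm h k hh.1 hle hky hk.2 hmhk
      omega
    · have : h < y := by
        by_contra! hhy
        exact H m hm k h hk.1 hle hhy hh.2 (by rw [hmhk, add_comm])
      omega
  let sums : Sym2 ℕ → ℕ := Sym2.lift ⟨fun h k => ω h + ω k, fun _ _ => add_comm _ _⟩
  have hsub : (Ico 1 n).image ω ⊆ G ∪ (Ico 1 y).sym2.image sums := by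
    simp only [subset_iff, mem_image, mem_Ico]
    rintro _ ⟨m, hm, rfl⟩
    rcases hcover m hm with hG | ⟨h, hh, k, hk, hmhk⟩
    · exact mem_union_left _ hG
    · have := hsmall m hm.2 h hh k hk hmhk
      refine mem_union_right _ (mem_image.2 ⟨s(h, k), ?_, hmhk.symm⟩)
      exact mk_mem_sym2_iff.2 ⟨mem_Ico.2 ⟨hh.1, this.1⟩, mem_Ico.2 ⟨hk.1, this.2⟩⟩
  have hcount : n - 1 ≤ G.card + y.choose 2 :=
    calc n - 1
        = ((Ico 1 n).image ω).card := by
          rw [card_image_of_injOn (by simpa only [coe_Ico] using hinj), Nat.card_Ico]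
      _ ≤ G.card + ((Ico 1 y).sym2.image sums).card :=
          (card_le_card hsub).trans (card_union_le _ _)
      _ ≤ G.card + y.choose 2 := by
          grw [card_image_le, card_sym2_Ico_one]
  omega

theorem StrictMonoOn.mem_or_eq_add_of_image_eq_apery {s : Set ℕ} {n : ℕ} {ω : ℕ → ℕ}
    (hmono : StrictMonoOn ω (Set.Iio n))
    (hω : ω '' Set.Iio n = apery (AddSubmonoid.closure s : Set ℕ) n) :
    ∀ m ∈ Set.Ico 1 n, (ω m ∈ s ∧ ω m ≠ n) ∨
      ∃ h ∈ Set.Ico 1 n, ∃ k ∈ Set.Ico 1 n, ω m = ω h + ω k := by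
  rintro m ⟨hm1, hmn⟩
  have hmem : ∀ i < n, ω i ∈ apery (AddSubmonoid.closure s : Set ℕ) n :=
    fun i hi => hω ▸ Set.mem_image_of_mem ω hi
  have hzero : 0 ∈ apery (AddSubmonoid.closure s : Set ℕ) n :=
    ⟨zero_mem _, fun ⟨_, _, h⟩ => by omega⟩
  obtain ⟨i, hi, hωi⟩ := hω ▸ hzero
  have hω0 : ω 0 = 0 := by
    have := hmono.monotoneOn ((Nat.zero_le i).trans_lt hi) hi (Nat.zero_le i)
    omega
  have hpreimage : ∀ u ∈ apery (AddSubmonoid.closure s : Set ℕ) n, u ≠ 0 →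
      ∃ h ∈ Set.Ico 1 n, ω h = u := by
    rintro u hu hu0
    obtain ⟨h, hh, rfl⟩ := hω ▸ hu
    exact ⟨h, ⟨Nat.one_le_iff_ne_zero.2 (by rintro rfl; exact hu0 hω0), hh⟩, rfl⟩
  have hm0 : ω m ≠ 0 := (hω0 ▸ hmono (by omega : 0 < n) hmn hm1).ne'
  rcases mem_apery_closure_or_exists_add (hmem m hmn) hm0 with hs | ⟨u, hu, v, hv, hu0, hv0, huv⟩
  · exact .inl ⟨hs, fun h => self_notMem_apery (h ▸ hmem m hmn)⟩
  · obtain ⟨h, hh, rfl⟩ := hpreimage u hu hu0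
    obtain ⟨k, hk, rfl⟩ := hpreimage v hv hv0
    exact .inr ⟨h, hh, k, hk, huv⟩

theorem stmt14
    (d : ℕ) (hd : 2 ≤ d)
    (a : Fin d → ℕ)
    (a1 : ℕ) (ha1 : a1 = a ⟨0, by omega⟩)
    (S : Set ℕ)
    (hS : S = {m : ℕ | ∃ c : Fin d → ℕ, m = ∑ i, c i * a i})
    (ω : ℕ → ℕ)
    (hω_mono : ∀ i j : ℕ, i < j → j < a1 → ω i < ω j)
    (hω_range : ω '' Set.Iio a1 = {w ∈ S | ¬ ∃ s ∈ S, s + a1 = w})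
    (y : ℕ) (hyd : y.choose 2 + 1 ≤ a1 - d)
    :
    (∃ h k : ℕ, 1 ≤ h ∧ h ≤ k ∧ y ≤ k ∧ k ≤ a1 - 1 ∧
        ω h + ω k ∈ {w ∈ S | ¬ ∃ s ∈ S, s + a1 = w}) ∧
      ω 1 + ω y ≤ ω (a1 - 1) := by
  have hSa : S = AddSubmonoid.closure (Set.range a) := by
    ext m
    simp [hS, AddSubmonoid.mem_closure_range_iff_of_fintype]
  change ω '' Set.Iio a1 = apery S a1 at hω_range
  change (∃ h k : ℕ, _ ∧ _ ∧ _ ∧ _ ∧ ω h + ω k ∈ apery S a1) ∧ _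
  have hmono : StrictMonoOn ω (Set.Iio a1) := fun i _ j hj hij => hω_mono i j hij hj
  have hcover := hmono.mem_or_eq_add_of_image_eq_apery (hSa ▸ hω_range)
  have hG : ((univ.image a).erase a1).card ≤ d - 1 := by
    rw [card_erase_of_mem (mem_image.2 ⟨_, mem_univ _, ha1.symm⟩)]
    grw [card_image_le, card_univ, Fintype.card_fin]
  obtain ⟨m, hm, h, k, hh, hhk, hyk, hk, hmhk⟩ :=
    exists_eq_add_of_card_lt (y := y) ((univ.image a).erase a1)
      (hmono.injOn.mono Set.Ico_subset_Iio_self) (by omega)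
      fun m hm => by simpa [and_comm] using hcover m hm
  refine ⟨⟨h, k, hh, hhk, hyk, by omega, hmhk ▸ hω_range ▸ Set.mem_image_of_mem ω hm⟩, ?_⟩
  calc ω 1 + ω y ≤ ω h + ω k :=
        add_le_add (hmono.monotoneOn (Set.mem_Iio.2 (by omega)) (Set.mem_Iio.2 (by omega)) hh)
          (hmono.monotoneOn (Set.mem_Iio.2 (by omega)) (Set.mem_Iio.2 (by omega)) hyk)
    _ = ω m := hmhk.symm
    _ ≤ ω (a1 - 1) := hmono.monotoneOn hm (Set.mem_Iio.2 (by omega)) (by omega)
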